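/- arXiv:2010.00895 — 2 statements merged into one kernel-verified Lean document; each statement's English description precedes it below -/
import Mathlib

section
/- Assume ω > v²/(τ²+1)², τ ∈ ℝ \ {0,±1}, v > 0, μ > 0. Then the two infima d(ω) = inf{ S_ω(u) : u ∈ H¹_τ \ {0}, I_ω(u) = 0 } and inf{ S̃(u) : u ∈ H¹_τ \ {0}, I_ω(u) ≤ 0 } coincide, where S̃(u) = (μ/(2(μ+1)))‖u‖^{2μ+2}_{2μ+2}. Moreover, any minimizer of one problem is a minimizer of the other, and any minimizer u of the second problem satisfies I_ω(u) = 0. -/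
open MeasureTheory Set Filter Real

noncomputable section

/-- The space `H¹_τ`: piecewise `H¹` functions on the two half-lines with jump condition
`u(0+) = τ u(0-)` (together with the extra integrability needed for the functionals). -/
structure HtauFun (τ μ : ℝ) where
  u : ℝ → ℝ
  d : ℝ → ℝ
  uL : ℝ
  uR : ℝ
  hderiv : ∀ x : ℝ, x ≠ 0 → HasDerivAt u (d x) x
  hlimL : Tendsto u (nhdsWithin 0 (Iio 0)) (nhds uL)
  hlimR : Tendsto u (nhdsWithin 0 (Ioi 0)) (nhds uR)
  hint2 : Integrable (fun x => (u x) ^ 2)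
  hintd : Integrable (fun x => (d x) ^ 2)
  hintp : Integrable (fun x => |u x| ^ (2 * μ + 2))
  hjump : uR = τ * uL

/-- `‖u'‖₂²` taken piecewise on the two half-lines. -/
def dnormSq (g : ℝ → ℝ) : ℝ :=
  (∫ x in Iio (0:ℝ), (g x) ^ 2) + ∫ x in Ioi (0:ℝ), (g x) ^ 2

/-- `‖u‖₂²`. -/
def l2Sq (f : ℝ → ℝ) : ℝ := ∫ x : ℝ, (f x) ^ 2

/-- `‖u‖_{2μ+2}^{2μ+2}`. -/
def lpP (μ : ℝ) (f : ℝ → ℝ) : ℝ := ∫ x : ℝ, |f x| ^ (2 * μ + 2)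

/-- Squared `H¹_τ` norm. -/
def HnormSq (f g : ℝ → ℝ) : ℝ := l2Sq f + dnormSq g

/-- The Nehari functional `I_ω`. -/
def Ifun (v ω μ : ℝ) (f g : ℝ → ℝ) (aL : ℝ) : ℝ :=
  dnormSq g - lpP μ f - v * aL ^ 2 + ω * l2Sq f

/-- The action functional `S_ω`. -/
def Sfun (v ω μ : ℝ) (f g : ℝ → ℝ) (aL : ℝ) : ℝ :=
  dnormSq g / 2 - lpP μ f / (2 * μ + 2) - v / 2 * aL ^ 2 + ω / 2 * l2Sq f

/-- The reduced action `S̃`. -/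
def StilF (μ : ℝ) (f : ℝ → ℝ) : ℝ := μ / (2 * (μ + 1)) * lpP μ f

/-- `u ≠ 0` as an element of `H¹_τ`. -/
def Nonzero {τ μ : ℝ} (U : HtauFun τ μ) : Prop :=
  ¬ (U.u =ᵐ[volume] fun _ => (0:ℝ))

/-- The ground-state level `d(ω)`: infimum of `S_ω` on the Nehari manifold. -/
def dInf (τ v ω μ : ℝ) : ℝ :=
  sInf {r : ℝ | ∃ U : HtauFun τ μ, Nonzero U ∧
    Ifun v ω μ U.u U.d U.uL = 0 ∧ r = Sfun v ω μ U.u U.d U.uL}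

/-- The level of the second minimization problem: infimum of `S̃` on `{I_ω ≤ 0}`. -/
def dInf' (τ v ω μ : ℝ) : ℝ :=
  sInf {r : ℝ | ∃ U : HtauFun τ μ, Nonzero U ∧
    Ifun v ω μ U.u U.d U.uL ≤ 0 ∧ r = StilF μ U.u}

/-!
On the Nehari manifold `S_ω = S̃`, so the first problem is the second restricted to `I_ω = 0`.
Conversely, write `I_ω = Q_ω - ‖u‖_{2μ+2}^{2μ+2}` with `Q_ω(u) = ‖u'‖² - v u(0-)² + ω ‖u‖²`.
The trace estimate `u(0-)² + u(0+)² ≤ ∫ |2 u u'|` together with the jump condition makes `Q_ω`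
positive on `H¹_τ \ {0}` as soon as `ω > v² / (τ² + 1)²`. Hence if `I_ω(u) < 0`, the rescaling
`α u` with `α = (Q_ω(u) / ‖u‖_{2μ+2}^{2μ+2})^{1/(2μ)} < 1` lies on the Nehari manifold and has
`S̃(α u) = α^{2μ+2} S̃(u) < S̃(u)`. So the two infima agree, and a minimiser of the second problem
cannot have `I_ω(u) < 0`.
-/

open Topology

lemma abs_two_mul_mul_le_sq_add_sq (x y : ℝ) : |2 * (x * y)| ≤ x ^ 2 + y ^ 2 := by
  rw [abs_mul, abs_two, abs_mul, ← sq_abs x, ← sq_abs y, ← mul_assoc]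
  exact two_mul_le_add_sq _ _

lemma mul_abs_two_mul_mul_le (c x y : ℝ) : c * |2 * (x * y)| ≤ y ^ 2 + c ^ 2 * x ^ 2 :=
  calc c * |2 * (x * y)| ≤ |c| * |2 * (x * y)| := by gcongr; exact le_abs_self c
    _ = |2 * ((c * x) * y)| := by rw [← abs_mul]; ring_nf
    _ ≤ y ^ 2 + c ^ 2 * x ^ 2 := by linarith [abs_two_mul_mul_le_sq_add_sq (c * x) y, mul_pow c x 2]

lemma integral_Iio_add_integral_Ioi {f : ℝ → ℝ} (hf : Integrable f) (b : ℝ) :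
    (∫ x in Iio b, f x) + ∫ x in Ioi b, f x = ∫ x, f x := by
  rw [setIntegral_congr_set Iio_ae_eq_Iic,
    intervalIntegral.integral_Iic_add_Ioi hf.integrableOn hf.integrableOn]

section Trace

variable {u d : ℝ → ℝ} {a b : ℝ}

/- For `x > a`, `u x ^ 2 = -∫_{x}^{∞} (u ^ 2)'`, because integrability of `u ^ 2` and of its
derivative forces `u ^ 2 → 0` at infinity. -/
lemma sq_le_integral_Ioi_abs_two_mul_mul (hderiv : ∀ x ∈ Ioi a, HasDerivAt u (d x) x)
    (hlim : Tendsto u (𝓝[>] a) (𝓝 b)) (hu : IntegrableOn (fun x => u x ^ 2) (Ioi a))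
    (hud : IntegrableOn (fun x => 2 * (u x * d x)) (Ioi a)) :
    b ^ 2 ≤ ∫ x in Ioi a, |2 * (u x * d x)| := by
  have hderiv_sq : ∀ x ∈ Ioi a, HasDerivAt (fun x => u x ^ 2) (2 * (u x * d x)) x := fun x hx =>
    ((hderiv x hx).pow 2).congr_deriv (by ring)
  have hbound : ∀ x ∈ Ioi a, u x ^ 2 ≤ ∫ y in Ioi a, |2 * (u y * d y)| := by
    intro x hx
    have hsub : Ioi x ⊆ Ioi a := Ioi_subset_Ioi (le_of_lt hx)
    have hFTC : ∫ y in Ioi x, 2 * (u y * d y) = 0 - u x ^ 2 :=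
      integral_Ioi_of_hasDerivAt_of_tendsto (hderiv_sq x hx).continuousAt.continuousWithinAt
        (fun y hy => hderiv_sq y (hsub hy)) (hud.mono_set hsub)
        (tendsto_zero_of_hasDerivAt_of_integrableOn_Ioi hderiv_sq hud hu)
    calc u x ^ 2 = -∫ y in Ioi x, 2 * (u y * d y) := by linarith
      _ ≤ ∫ y in Ioi x, |2 * (u y * d y)| := (neg_le_abs _).trans abs_integral_le_integral_abs
      _ ≤ ∫ y in Ioi a, |2 * (u y * d y)| :=
        setIntegral_mono_set hud.abs (ae_of_all _ fun _ => abs_nonneg _) hsub.eventuallyLE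
  exact le_of_tendsto (hlim.pow 2) (eventually_nhdsWithin_of_forall hbound)

lemma sq_le_integral_Iio_abs_two_mul_mul (hderiv : ∀ x ∈ Iio a, HasDerivAt u (d x) x)
    (hlim : Tendsto u (𝓝[<] a) (𝓝 b)) (hu : IntegrableOn (fun x => u x ^ 2) (Iio a))
    (hud : IntegrableOn (fun x => 2 * (u x * d x)) (Iio a)) :
    b ^ 2 ≤ ∫ x in Iio a, |2 * (u x * d x)| := by
  have hderiv_sq : ∀ x ∈ Iio a, HasDerivAt (fun x => u x ^ 2) (2 * (u x * d x)) x := fun x hx =>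
    ((hderiv x hx).pow 2).congr_deriv (by ring)
  have hbound : ∀ x ∈ Iio a, u x ^ 2 ≤ ∫ y in Iio a, |2 * (u y * d y)| := by
    intro x hx
    have hsub : Iic x ⊆ Iio a := Iic_subset_Iio.2 hx
    have hFTC : ∫ y in Iic x, 2 * (u y * d y) = u x ^ 2 - 0 :=
      integral_Iic_of_hasDerivAt_of_tendsto (hderiv_sq x hx).continuousAt.continuousWithinAt
        (fun y hy => hderiv_sq y (hsub (Iio_subset_Iic_self hy))) (hud.mono_set hsub)
        (tendsto_zero_of_hasDerivAt_of_integrableOn_Iic (fun y hy => hderiv_sq y (hsub hy))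
          (hud.mono_set hsub) (hu.mono_set hsub))
    calc u x ^ 2 = ∫ y in Iic x, 2 * (u y * d y) := by linarith
      _ ≤ ∫ y in Iic x, |2 * (u y * d y)| := (le_abs_self _).trans abs_integral_le_integral_abs
      _ ≤ ∫ y in Iio a, |2 * (u y * d y)| :=
        setIntegral_mono_set hud.abs (ae_of_all _ fun _ => abs_nonneg _) hsub.eventuallyLE
  exact le_of_tendsto (hlim.pow 2) (eventually_nhdsWithin_of_forall hbound)

end Trace

def quadForm (v ω : ℝ) (f g : ℝ → ℝ) (aL : ℝ) : ℝ :=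
  dnormSq g - v * aL ^ 2 + ω * l2Sq f

lemma Ifun_eq_quadForm_sub (v ω μ : ℝ) (f g : ℝ → ℝ) (aL : ℝ) :
    Ifun v ω μ f g aL = quadForm v ω f g aL - lpP μ f := by
  unfold Ifun quadForm
  ring

lemma l2Sq_const_mul (α : ℝ) (f : ℝ → ℝ) : l2Sq (fun x => α * f x) = α ^ 2 * l2Sq f := by
  simp only [l2Sq, mul_pow, integral_const_mul]

lemma dnormSq_const_mul (α : ℝ) (g : ℝ → ℝ) :
    dnormSq (fun x => α * g x) = α ^ 2 * dnormSq g := by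
  simp only [dnormSq, mul_pow, integral_const_mul, mul_add]

lemma lpP_const_mul (μ α : ℝ) (f : ℝ → ℝ) :
    lpP μ (fun x => α * f x) = |α| ^ (2 * μ + 2) * lpP μ f := by
  simp only [lpP, abs_mul, mul_rpow (abs_nonneg α) (abs_nonneg _), integral_const_mul]

lemma StilF_const_mul (μ α : ℝ) (f : ℝ → ℝ) :
    StilF μ (fun x => α * f x) = |α| ^ (2 * μ + 2) * StilF μ f := by
  rw [StilF, StilF, lpP_const_mul]
  ring

lemma Ifun_const_mul {v ω μ α : ℝ} (hα : 0 < α) (f g : ℝ → ℝ) (aL : ℝ) :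
    Ifun v ω μ (fun x => α * f x) (fun x => α * g x) (α * aL)
      = α ^ 2 * (quadForm v ω f g aL - α ^ (2 * μ) * lpP μ f) := by
  rw [Ifun, dnormSq_const_mul, lpP_const_mul, l2Sq_const_mul, abs_of_pos hα,
    rpow_add hα, rpow_two, quadForm]
  ring

lemma lpP_nonneg (μ : ℝ) (f : ℝ → ℝ) : 0 ≤ lpP μ f :=
  integral_nonneg fun _ => rpow_nonneg (abs_nonneg _) _

lemma StilF_nonneg {μ : ℝ} (hμ : 0 ≤ μ) (f : ℝ → ℝ) : 0 ≤ StilF μ f :=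
  mul_nonneg (by positivity) (lpP_nonneg μ f)

lemma Sfun_eq_StilF_of_Ifun_eq_zero {v ω μ : ℝ} (hμ : μ + 1 ≠ 0) {f g : ℝ → ℝ} {aL : ℝ}
    (hI : Ifun v ω μ f g aL = 0) : Sfun v ω μ f g aL = StilF μ f := by
  have hdn : dnormSq g = lpP μ f + v * aL ^ 2 - ω * l2Sq f := by rw [Ifun] at hI; linarith
  rw [Sfun, StilF, hdn]
  field_simp
  ring

namespace HtauFun

variable {τ μ : ℝ}

lemma aestronglyMeasurable_u (U : HtauFun τ μ) : AEStronglyMeasurable U.u := by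
  have hcont : ContinuousOn U.u {0}ᶜ := fun x hx =>
    (U.hderiv x hx).continuousAt.continuousWithinAt
  simpa using hcont.aestronglyMeasurable (μ := volume) (measurableSet_singleton 0).compl

lemma aestronglyMeasurable_d (U : HtauFun τ μ) : AEStronglyMeasurable U.d := by
  refine (measurable_deriv U.u).aestronglyMeasurable.congr ?_
  filter_upwards [volume.ae_ne 0] with x hx using (U.hderiv x hx).deriv

lemma integrable_two_mul_u_mul_d (U : HtauFun τ μ) :
    Integrable (fun x => 2 * (U.u x * U.d x)) :=
  (U.hint2.add U.hintd).mono'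
    (aestronglyMeasurable_const.mul (U.aestronglyMeasurable_u.mul U.aestronglyMeasurable_d))
    (ae_of_all _ fun x => abs_two_mul_mul_le_sq_add_sq (U.u x) (U.d x))

lemma uL_sq_add_uR_sq_le (U : HtauFun τ μ) :
    U.uL ^ 2 + U.uR ^ 2 ≤ ∫ x, |2 * (U.u x * U.d x)| := by
  rw [← integral_Iio_add_integral_Ioi U.integrable_two_mul_u_mul_d.abs 0]
  exact add_le_add
    (sq_le_integral_Iio_abs_two_mul_mul (fun x hx => U.hderiv x hx.ne) U.hlimL
      U.hint2.integrableOn U.integrable_two_mul_u_mul_d.integrableOn)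
    (sq_le_integral_Ioi_abs_two_mul_mul (fun x hx => U.hderiv x hx.ne') U.hlimR
      U.hint2.integrableOn U.integrable_two_mul_u_mul_d.integrableOn)

lemma l2Sq_pos {U : HtauFun τ μ} (hU : Nonzero U) : 0 < l2Sq U.u := by
  refine (integral_nonneg fun x => sq_nonneg (U.u x)).lt_of_ne fun h => hU ?_
  filter_upwards [(integral_eq_zero_iff_of_nonneg (fun x => sq_nonneg (U.u x)) U.hint2).1 h.symm]
    with x hx using pow_eq_zero_iff two_ne_zero |>.1 hx

/- With `c = v / (τ² + 1)` the jump condition gives `v uL² = c (uL² + uR²)`, and the trace bound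
followed by `c |2 u u'| ≤ u'² + c² u²` yields `Q_ω(u) ≥ (ω - c²) ‖u‖₂²`. -/
lemma quadForm_pos {v ω : ℝ} (hv : 0 < v) (hω : v ^ 2 / (τ ^ 2 + 1) ^ 2 < ω)
    {U : HtauFun τ μ} (hU : Nonzero U) : 0 < quadForm v ω U.u U.d U.uL := by
  set c := v / (τ ^ 2 + 1)
  have hc : 0 < c := by positivity
  have hjump : v * U.uL ^ 2 = c * (U.uL ^ 2 + U.uR ^ 2) := by
    rw [U.hjump]; simp only [c]; field_simp; ring
  have htrace : v * U.uL ^ 2 ≤ c * ∫ x, |2 * (U.u x * U.d x)| :=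
    hjump.trans_le (by gcongr; exact U.uL_sq_add_uR_sq_le)
  have hamgm : c * ∫ x, |2 * (U.u x * U.d x)| ≤ dnormSq U.d + c ^ 2 * l2Sq U.u := by
    rw [dnormSq, integral_Iio_add_integral_Ioi U.hintd, l2Sq, ← integral_const_mul,
      ← integral_const_mul, ← integral_add U.hintd (U.hint2.const_mul _)]
    exact integral_mono (U.integrable_two_mul_u_mul_d.abs.const_mul c)
      (U.hintd.add (U.hint2.const_mul _)) fun x => mul_abs_two_mul_mul_le c (U.u x) (U.d x)
  have hcω : c ^ 2 < ω := by rwa [div_pow]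
  unfold quadForm
  nlinarith [l2Sq_pos hU]

instance : SMul ℝ (HtauFun τ μ) where
  smul α U :=
  { u := fun x => α * U.u x
    d := fun x => α * U.d x
    uL := α * U.uL
    uR := α * U.uR
    hderiv := fun x hx => (U.hderiv x hx).const_mul α
    hlimL := U.hlimL.const_mul α
    hlimR := U.hlimR.const_mul α
    hint2 := by simpa only [mul_pow] using U.hint2.const_mul (α ^ 2)
    hintd := by simpa only [mul_pow] using U.hintd.const_mul (α ^ 2)
    hintp := by
      simpa only [abs_mul, mul_rpow (abs_nonneg α) (abs_nonneg _)]
        using U.hintp.const_mul (|α| ^ (2 * μ + 2))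
    hjump := by rw [U.hjump]; ring }

lemma smul_u (α : ℝ) (U : HtauFun τ μ) : (α • U).u = fun x => α * U.u x := rfl

lemma smul_d (α : ℝ) (U : HtauFun τ μ) : (α • U).d = fun x => α * U.d x := rfl

lemma smul_uL (α : ℝ) (U : HtauFun τ μ) : (α • U).uL = α * U.uL := rfl

lemma nonzero_smul {α : ℝ} (hα : α ≠ 0) {U : HtauFun τ μ} (hU : Nonzero U) :
    Nonzero (α • U) := fun h =>
  hU (by filter_upwards [h] with x hx using (mul_eq_zero.1 hx).resolve_left hα)

lemma exists_nehari_StilF_lt {v ω : ℝ} (hv : 0 < v) (hμ : 0 < μ)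
    (hω : v ^ 2 / (τ ^ 2 + 1) ^ 2 < ω) {U : HtauFun τ μ} (hU : Nonzero U)
    (hI : Ifun v ω μ U.u U.d U.uL < 0) :
    ∃ W : HtauFun τ μ, Nonzero W ∧ Ifun v ω μ W.u W.d W.uL = 0 ∧ StilF μ W.u < StilF μ U.u := by
  set Q := quadForm v ω U.u U.d U.uL
  set P := lpP μ U.u
  have hQ : 0 < Q := quadForm_pos hv hω hU
  have hQP : Q < P := by linarith [Ifun_eq_quadForm_sub v ω μ U.u U.d U.uL]
  have hP : 0 < P := hQ.trans hQP
  set α := (Q / P) ^ (2 * μ)⁻¹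
  have hα : 0 < α := rpow_pos_of_pos (div_pos hQ hP) _
  have hα_pow : α ^ (2 * μ) = Q / P := by
    rw [← rpow_mul (div_pos hQ hP).le, inv_mul_cancel₀ (by positivity), rpow_one]
  have hα_lt : α < 1 := rpow_lt_one (div_pos hQ hP).le ((div_lt_one hP).2 hQP) (by positivity)
  have hStilF : 0 < StilF μ U.u := mul_pos (by positivity) hP
  refine ⟨α • U, nonzero_smul hα.ne' hU, ?_, ?_⟩
  · rw [smul_u, smul_d, smul_uL, Ifun_const_mul hα, hα_pow, div_mul_cancel₀ _ hP.ne', sub_self,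
      mul_zero]
  · rw [smul_u, StilF_const_mul, abs_of_pos hα]
    exact mul_lt_of_lt_one_left hStilF (rpow_lt_one hα.le hα_lt (by positivity))

lemma exists_nehari_StilF_le {v ω : ℝ} (hv : 0 < v) (hμ : 0 < μ)
    (hω : v ^ 2 / (τ ^ 2 + 1) ^ 2 < ω) {U : HtauFun τ μ} (hU : Nonzero U)
    (hI : Ifun v ω μ U.u U.d U.uL ≤ 0) :
    ∃ W : HtauFun τ μ, Nonzero W ∧ Ifun v ω μ W.u W.d W.uL = 0 ∧ StilF μ W.u ≤ StilF μ U.u := by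
  rcases hI.lt_or_eq with hlt | heq
  · obtain ⟨W, hW, hWI, hWlt⟩ := exists_nehari_StilF_lt hv hμ hω hU hlt
    exact ⟨W, hW, hWI, hWlt.le⟩
  · exact ⟨U, hU, heq, le_rfl⟩

end HtauFun

lemma dInf_eq_dInf' {τ v ω μ : ℝ} (hv : 0 < v) (hμ : 0 < μ) (hω : v ^ 2 / (τ ^ 2 + 1) ^ 2 < ω) :
    dInf τ v ω μ = dInf' τ v ω μ := by
  refine csInf_eq_csInf_of_forall_exists_le ?_ ?_
  · rintro _ ⟨U, hU, hI, rfl⟩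
    exact ⟨_, ⟨U, hU, hI.le, rfl⟩, (Sfun_eq_StilF_of_Ifun_eq_zero (by positivity) hI).ge⟩
  · rintro _ ⟨U, hU, hI, rfl⟩
    obtain ⟨W, hW, hWI, hWle⟩ := HtauFun.exists_nehari_StilF_le hv hμ hω hU hI
    exact ⟨_, ⟨W, hW, hWI, rfl⟩, (Sfun_eq_StilF_of_Ifun_eq_zero (by positivity) hWI).trans_le hWle⟩

lemma dInf'_le_StilF {τ v ω μ : ℝ} (hμ : 0 ≤ μ) {U : HtauFun τ μ} (hU : Nonzero U)
    (hI : Ifun v ω μ U.u U.d U.uL ≤ 0) : dInf' τ v ω μ ≤ StilF μ U.u :=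
  csInf_le ⟨0, by rintro _ ⟨W, -, -, rfl⟩; exact StilF_nonneg hμ _⟩ ⟨U, hU, hI, rfl⟩

lemma Ifun_eq_zero_of_StilF_eq_dInf' {τ v ω μ : ℝ} (hv : 0 < v) (hμ : 0 < μ)
    (hω : v ^ 2 / (τ ^ 2 + 1) ^ 2 < ω) {U : HtauFun τ μ} (hU : Nonzero U)
    (hI : Ifun v ω μ U.u U.d U.uL ≤ 0) (hmin : StilF μ U.u = dInf' τ v ω μ) :
    Ifun v ω μ U.u U.d U.uL = 0 := by
  refine hI.lt_or_eq.resolve_left fun hlt => ?_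
  obtain ⟨W, hW, hWI, hWlt⟩ := HtauFun.exists_nehari_StilF_lt hv hμ hω hU hlt
  exact (dInf'_le_StilF hμ.le hW hWI.le).not_gt (hmin ▸ hWlt)

theorem nehari_equivalence_general
    (τ v ω μ : ℝ)
    (hv : 0 < v) (hμ : 0 < μ) (hω : ω > v ^ 2 / (τ ^ 2 + 1) ^ 2) :
    dInf τ v ω μ = dInf' τ v ω μ ∧
    (∀ U : HtauFun τ μ, Nonzero U → Ifun v ω μ U.u U.d U.uL = 0 →
      Sfun v ω μ U.u U.d U.uL = dInf τ v ω μ → StilF μ U.u = dInf' τ v ω μ) ∧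
    (∀ U : HtauFun τ μ, Nonzero U → Ifun v ω μ U.u U.d U.uL ≤ 0 →
      StilF μ U.u = dInf' τ v ω μ →
        Ifun v ω μ U.u U.d U.uL = 0 ∧ Sfun v ω μ U.u U.d U.uL = dInf τ v ω μ) := by
  have hd := dInf_eq_dInf' hv hμ hω
  have hμ1 : μ + 1 ≠ 0 := by positivity
  refine ⟨hd, fun U _ hI hS => ?_, fun U hU hI hS => ?_⟩
  · rw [← Sfun_eq_StilF_of_Ifun_eq_zero hμ1 hI, hS, hd]
  · have hI0 := Ifun_eq_zero_of_StilF_eq_dInf' hv hμ hω hU hI hS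
    exact ⟨hI0, by rw [Sfun_eq_StilF_of_Ifun_eq_zero hμ1 hI0, hS, hd]⟩

/-- the two minimization problems (action on the Nehari manifold, reduced action
on `{I_ω ≤ 0}`) have the same infimum, minimizers of one are minimizers of the other, and any
minimizer of the second problem lies on the Nehari manifold. -/
theorem nehari_equivalence
    (τ v ω μ : ℝ) (hτ0 : τ ≠ 0) (hτ1 : τ ≠ 1) (hτm1 : τ ≠ -1)
    (hv : 0 < v) (hμ : 0 < μ) (hω : ω > v ^ 2 / (τ ^ 2 + 1) ^ 2) :
    dInf τ v ω μ = dInf' τ v ω μ ∧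
    (∀ U : HtauFun τ μ, Nonzero U → Ifun v ω μ U.u U.d U.uL = 0 →
      Sfun v ω μ U.u U.d U.uL = dInf τ v ω μ → StilF μ U.u = dInf' τ v ω μ) ∧
    (∀ U : HtauFun τ μ, Nonzero U → Ifun v ω μ U.u U.d U.uL ≤ 0 →
      StilF μ U.u = dInf' τ v ω μ →
        Ifun v ω μ U.u U.d U.uL = 0 ∧ Sfun v ω μ U.u U.d U.uL = dInf τ v ω μ) :=
  nehari_equivalence_general τ v ω μ hv hμ hω
end
end

section
/- Let ω > v²/(τ²+1)², τ ∈ ℝ \ {0,±1}, v > 0, μ > 0, and let (u_n) ⊂ H¹_τ \ {0} be a sequence with I_ω(u_n) ≤ 0 and S̃(u_n) → d(ω). Then (u_n) is bounded in H¹_τ. -/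
open MeasureTheory Set Filter Real

noncomputable section

/-! The quadratic part of `I_ω` is coercive on `H¹_τ`. Integrating `(u²)' = 2uu' ≤ εu² + ε⁻¹u'²`
from a point far out on a half-line, where `u²` is small because it is integrable, gives the trace
bounds `u(0±)² ≤ ε‖u‖²_{L²(ℝ±)} + ε⁻¹‖u'‖²_{L²(ℝ±)}`; with the jump condition `u(0+) = τu(0-)`
they add up to `(τ² + 1)u(0-)² ≤ ε‖u‖₂² + ε⁻¹‖u'‖₂²`. Since `v² < ω(τ² + 1)²`, some `ε` lets the
term `v u(0-)²` be absorbed, so `δ‖u‖²_{H¹} ≤ I_ω(u) + ‖u‖^{2μ+2}_{2μ+2}` for a fixed `δ > 0`.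
On `{I_ω ≤ 0}` the `H¹` norm is thus controlled by `‖u‖^{2μ+2}_{2μ+2} = (2(μ + 1)/μ) S̃(u)`, which
stays bounded along a sequence on which `S̃` converges. -/

open Topology

theorem sq_le_setIntegral_Iio_of_hasDerivAt {u d : ℝ → ℝ} {c L ε : ℝ} (hε : 0 < ε)
    (hderiv : ∀ x < c, HasDerivAt u (d x) x) (hlim : Tendsto u (𝓝[<] c) (𝓝 L))
    (hu : IntegrableOn (fun x => u x ^ 2) (Iio c)) (hd : IntegrableOn (fun x => d x ^ 2) (Iio c)) :
    L ^ 2 ≤ ∫ x in Iio c, (ε * u x ^ 2 + ε⁻¹ * d x ^ 2) := by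
  set φ : ℝ → ℝ := fun x => ε * u x ^ 2 + ε⁻¹ * d x ^ 2
  have hφ : IntegrableOn φ (Iio c) := (hu.const_mul _).add (hd.const_mul _)
  have increment_le : ∀ a b, a ≤ b → b < c → u b ^ 2 - u a ^ 2 ≤ ∫ x in Iio c, φ x := by
    intro a b hab hbc
    have hsub : Icc a b ⊆ Iio c := fun x hx => hx.2.trans_lt hbc
    calc u b ^ 2 - u a ^ 2 ≤ ∫ x in a..b, φ x := by
          refine intervalIntegral.sub_le_integral_of_hasDeriv_right_of_le hab
            (fun x hx => ((hderiv x (hsub hx)).continuousAt.pow 2).continuousWithinAt)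
            (fun x hx => ((hderiv x (hsub (Ioo_subset_Icc_self hx))).pow 2).hasDerivWithinAt)
            (hφ.mono_set hsub) (fun x _ => ?_)
          simpa [mul_comm, mul_assoc, mul_left_comm] using
            two_mul_le_add_mul_sq (a := u x) (b := d x) hε
      _ = ∫ x in Ioc a b, φ x := intervalIntegral.integral_of_le hab
      _ ≤ ∫ x in Iio c, φ x :=
          setIntegral_mono_set hφ (ae_of_all _ fun x => by positivity)
            (Ioc_subset_Icc_self.trans hsub).eventuallyLE
  have exists_sq_lt : ∀ b < c, ∀ δ > 0, ∃ a ≤ b, u a ^ 2 < δ := by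
    intro b hb δ hδ
    by_contra! h
    have hfin := hu.measure_ge_lt_top hδ
    refine hfin.ne (top_le_iff.mp ?_)
    calc ⊤ = volume (Iic b) := Real.volume_Iic.symm
      _ = volume.restrict (Iio c) (Iic b) := by
          rw [Measure.restrict_apply measurableSet_Iic, inter_eq_left.mpr (Iic_subset_Iio.mpr hb)]
      _ ≤ _ := measure_mono h
  have hbound : ∀ b < c, u b ^ 2 ≤ ∫ x in Iio c, φ x := by
    intro b hb
    refine le_of_forall_pos_le_add fun δ hδ => ?_
    obtain ⟨a, hab, ha⟩ := exists_sq_lt b hb δ hδ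
    linarith [increment_le a b hab hb]
  exact le_of_tendsto (hlim.pow 2) (eventually_mem_nhdsWithin.mono hbound)

theorem integrableOn_Iio_comp_neg_iff {f : ℝ → ℝ} {c : ℝ} :
    IntegrableOn (fun x => f (-x)) (Iio c) ↔ IntegrableOn f (Ioi (-c)) := by
  rw [← (Measure.measurePreserving_neg volume).integrableOn_comp_preimage
    (Homeomorph.neg ℝ).measurableEmbedding]
  simp [Function.comp_def]

theorem sq_le_setIntegral_Ioi_of_hasDerivAt {u d : ℝ → ℝ} {c L ε : ℝ} (hε : 0 < ε)
    (hderiv : ∀ x > c, HasDerivAt u (d x) x) (hlim : Tendsto u (𝓝[>] c) (𝓝 L))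
    (hu : IntegrableOn (fun x => u x ^ 2) (Ioi c)) (hd : IntegrableOn (fun x => d x ^ 2) (Ioi c)) :
    L ^ 2 ≤ ∫ x in Ioi c, (ε * u x ^ 2 + ε⁻¹ * d x ^ 2) := by
  have hderiv' : ∀ x < -c, HasDerivAt (fun y => u (-y)) (-d (-x)) x := fun x hx => by
    simpa [Function.comp_def] using (hderiv (-x) (lt_neg.mp hx)).comp x (hasDerivAt_neg' x)
  have hlim' : Tendsto (fun y => u (-y)) (𝓝[<] (-c)) (𝓝 L) :=
    hlim.comp tendsto_neg_nhdsLT_neg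
  have := sq_le_setIntegral_Iio_of_hasDerivAt hε hderiv' hlim'
    (integrableOn_Iio_comp_neg_iff.mpr (by rw [neg_neg]; exact hu))
    (integrableOn_Iio_comp_neg_iff (f := fun x => (-d x) ^ 2).mpr (by simpa using hd))
  rw [setIntegral_congr_set Iio_ae_eq_Iic] at this
  simpa using this.trans_eq (integral_comp_neg_Iic (-c) fun x => ε * u x ^ 2 + ε⁻¹ * (-d x) ^ 2)

theorem integral_eq_setIntegral_Iio_add_setIntegral_Ioi {f : ℝ → ℝ} (hf : Integrable f) (c : ℝ) :
    ∫ x, f x = (∫ x in Iio c, f x) + ∫ x in Ioi c, f x := by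
  rw [← intervalIntegral.integral_Iic_add_Ioi hf.integrableOn hf.integrableOn,
    setIntegral_congr_set Iio_ae_eq_Iic]

theorem HtauFun.trace_sq_le {τ μ : ℝ} (U : HtauFun τ μ) {ε : ℝ} (hε : 0 < ε) :
    (τ ^ 2 + 1) * U.uL ^ 2 ≤ ε * l2Sq U.u + ε⁻¹ * dnormSq U.d := by
  have hleft := sq_le_setIntegral_Iio_of_hasDerivAt hε (fun x hx => U.hderiv x hx.ne) U.hlimL
    U.hint2.integrableOn U.hintd.integrableOn
  have hright := sq_le_setIntegral_Ioi_of_hasDerivAt hε (fun x hx => U.hderiv x hx.ne') U.hlimR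
    U.hint2.integrableOn U.hintd.integrableOn
  have hsplit : ∀ s : Set ℝ, ∫ x in s, (ε * U.u x ^ 2 + ε⁻¹ * U.d x ^ 2) =
      ε * (∫ x in s, U.u x ^ 2) + ε⁻¹ * ∫ x in s, U.d x ^ 2 := fun s => by
    rw [integral_add (U.hint2.integrableOn.const_mul _) (U.hintd.integrableOn.const_mul _),
      integral_const_mul, integral_const_mul]
  rw [hsplit] at hleft hright
  rw [l2Sq, dnormSq, integral_eq_setIntegral_Iio_add_setIntegral_Ioi U.hint2 0]
  have hjump : U.uR ^ 2 = τ ^ 2 * U.uL ^ 2 := by rw [U.hjump, mul_pow]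
  linarith

theorem l2Sq_nonneg (f : ℝ → ℝ) : 0 ≤ l2Sq f :=
  integral_nonneg fun _ => sq_nonneg _

theorem dnormSq_nonneg (g : ℝ → ℝ) : 0 ≤ dnormSq g :=
  add_nonneg (setIntegral_nonneg measurableSet_Iio fun _ _ => sq_nonneg _)
    (setIntegral_nonneg measurableSet_Ioi fun _ _ => sq_nonneg _)

theorem exists_pos_mul_add_le {T v ω : ℝ} (hT : 0 < T) (hv : 0 < v) (hω : v ^ 2 / T ^ 2 < ω) :
    ∃ ε > 0, ∃ δ > 0, ∀ X Y L : ℝ, 0 ≤ X → 0 ≤ Y → T * L ≤ ε * X + ε⁻¹ * Y →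
      δ * (X + Y) ≤ Y - v * L + ω * X := by
  have hlt : v / T < T * ω / v := by
    rw [div_lt_div_iff₀ hT hv]
    rw [div_lt_iff₀ (by positivity)] at hω
    linarith
  obtain ⟨ε, hε_gt, hε_lt⟩ := exists_between hlt
  have hε : 0 < ε := (div_pos hv hT).trans hε_gt
  have hX : 0 < ω - v * ε / T := by
    rw [sub_pos, div_lt_iff₀ hT]
    rw [lt_div_iff₀ hv] at hε_lt
    linarith
  have hY : 0 < 1 - v / (T * ε) := by
    rw [sub_pos, div_lt_one (by positivity)]
    rwa [div_lt_iff₀ hT, mul_comm] at hε_gt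
  refine ⟨ε, hε, min (ω - v * ε / T) (1 - v / (T * ε)), lt_min hX hY,
    fun X Y L hX0 hY0 htrace => ?_⟩
  have hvL : v * L ≤ v * ε / T * X + v / (T * ε) * Y := by
    have := mul_le_mul_of_nonneg_left htrace (div_pos hv hT).le
    field_simp at this ⊢
    linarith
  calc min (ω - v * ε / T) (1 - v / (T * ε)) * (X + Y)
      ≤ (ω - v * ε / T) * X + (1 - v / (T * ε)) * Y := by
        rw [mul_add]
        gcongr
        exacts [min_le_left _ _, min_le_right _ _]
    _ ≤ Y - v * L + ω * X := by linarith

theorem HtauFun.exists_pos_mul_HnormSq_le {τ v ω : ℝ} (μ : ℝ) (hv : 0 < v)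
    (hω : v ^ 2 / (τ ^ 2 + 1) ^ 2 < ω) :
    ∃ δ > 0, ∀ U : HtauFun τ μ, δ * HnormSq U.u U.d ≤ Ifun v ω μ U.u U.d U.uL + lpP μ U.u := by
  obtain ⟨ε, hε, δ, hδ, hcoer⟩ := exists_pos_mul_add_le (by positivity) hv hω
  refine ⟨δ, hδ, fun U => ?_⟩
  have := hcoer _ _ _ (l2Sq_nonneg U.u) (dnormSq_nonneg U.d) (U.trace_sq_le hε)
  rw [HnormSq, Ifun]
  linarith

theorem minimizing_sequence_bounded_general
    (τ v ω μ : ℝ)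
    (hv : 0 < v) (hμ : 0 < μ) (hω : ω > v ^ 2 / (τ ^ 2 + 1) ^ 2)
    (U : ℕ → HtauFun τ μ)
    (hI : ∀ n, Ifun v ω μ (U n).u (U n).d (U n).uL ≤ 0)
    (hS : Tendsto (fun n => StilF μ (U n).u) atTop (nhds (dInf τ v ω μ))) :
    ∃ C : ℝ, ∀ n, HnormSq (U n).u (U n).d ≤ C := by
  obtain ⟨δ, hδ, hcoer⟩ := HtauFun.exists_pos_mul_HnormSq_le μ hv hω
  obtain ⟨M, hM⟩ := hS.bddAbove_range
  have hc : 0 < μ / (2 * (μ + 1)) := by positivity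
  refine ⟨M / (μ / (2 * (μ + 1))) / δ, fun n => ?_⟩
  have hlpP : lpP μ (U n).u ≤ M / (μ / (2 * (μ + 1))) := by
    rw [le_div_iff₀ hc, mul_comm]
    exact hM (mem_range_self n)
  rw [le_div_iff₀ hδ, mul_comm]
  linarith [hcoer (U n), hI n]

/-- any minimizing sequence for `S̃` over `{I_ω ≤ 0}` is bounded in `H¹_τ`. -/
theorem minimizing_sequence_bounded
    (τ v ω μ : ℝ) (hτ0 : τ ≠ 0) (hτ1 : τ ≠ 1) (hτm1 : τ ≠ -1)
    (hv : 0 < v) (hμ : 0 < μ) (hω : ω > v ^ 2 / (τ ^ 2 + 1) ^ 2)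
    (U : ℕ → HtauFun τ μ) (hnz : ∀ n, Nonzero (U n))
    (hI : ∀ n, Ifun v ω μ (U n).u (U n).d (U n).uL ≤ 0)
    (hS : Tendsto (fun n => StilF μ (U n).u) atTop (nhds (dInf τ v ω μ))) :
    ∃ C : ℝ, ∀ n, HnormSq (U n).u (U n).d ≤ C :=
  minimizing_sequence_bounded_general τ v ω μ hv hμ hω U hI hS
end
end
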